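/- arXiv:2011.10758 — 8 statements merged into one kernel-verified Lean document; each statement's English description precedes it below -/
import Mathlib

section
/- Let n, m, p be positive natural numbers and let A (n×n), B (n×m), C (p×n) be complex matrices. Let Q be an n×n positive semidefinite Hermitian matrix, R an m×m positive definite Hermitian matrix, V a p×p positive definite Hermitian matrix, and W an n×n positive semidefinite Hermitian matrix. Suppose the Hermitian matrix S satisfies the control algebraic Riccati equation S·A + Aᴴ·S − S·B·R⁻¹·Bᴴ·S + Q = 0 and the Hermitian matrix Σ satisfies the filter algebraic Riccati equation A·Σ + Σ·Aᴴ − Σ·Cᴴ·V⁻¹·C·Σ + W = 0. Then the two expressions for the optimal LQG cost coincide: trace(S·Σ·Cᴴ·V⁻¹·C·Σ + Σ·Q) = trace(Σ·S·B·R⁻¹·Bᴴ·S + S·W). -/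
open Matrix
open scoped ComplexOrder

/-- The two closed-form expressions for the optimal continuous-time
infinite-horizon LQG cost coincide. -/
theorem lqg_ct_optimal_cost_eq {n m p : ℕ} (hn : 0 < n) (hm : 0 < m) (hp : 0 < p)
    (A : Matrix (Fin n) (Fin n) ℂ) (B : Matrix (Fin n) (Fin m) ℂ)
    (C : Matrix (Fin p) (Fin n) ℂ)
    (Q : Matrix (Fin n) (Fin n) ℂ) (hQ : Q.PosSemidef)
    (R : Matrix (Fin m) (Fin m) ℂ) (hR : R.PosDef)
    (V : Matrix (Fin p) (Fin p) ℂ) (hV : V.PosDef)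
    (W : Matrix (Fin n) (Fin n) ℂ) (hW : W.PosSemidef)
    (S : Matrix (Fin n) (Fin n) ℂ) (hS : S.IsHermitian)
    (hRicS : S * A + Aᴴ * S - S * B * R⁻¹ * Bᴴ * S + Q = 0)
    (Sg : Matrix (Fin n) (Fin n) ℂ) (hSg : Sg.IsHermitian)
    (hRicSg : A * Sg + Sg * Aᴴ - Sg * Cᴴ * V⁻¹ * C * Sg + W = 0) :
    (S * Sg * Cᴴ * V⁻¹ * C * Sg + Sg * Q).trace
      = (Sg * S * B * R⁻¹ * Bᴴ * S + S * W).trace := by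
  have h1 := congrArg (fun M => (Sg * M).trace) hRicS
  have h2 := congrArg (fun M => (S * M).trace) hRicSg
  simp only [mul_add, mul_sub, trace_add, trace_sub, mul_zero, trace_zero] at h1 h2
  have c1 : (Sg * (S * A)).trace = (S * (A * Sg)).trace := by
    rw [← mul_assoc, ← mul_assoc]; exact (trace_mul_cycle S A Sg).symm
  have c2 : (Sg * (Aᴴ * S)).trace = (S * (Sg * Aᴴ)).trace := by
    rw [← mul_assoc, ← mul_assoc]; exact trace_mul_cycle Sg Aᴴ S
  have c3 : (Sg * (S * B * R⁻¹ * Bᴴ * S)).trace = (Sg * S * B * R⁻¹ * Bᴴ * S).trace := by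
    simp only [Matrix.mul_assoc]
  have c4 : (S * (Sg * Cᴴ * V⁻¹ * C * Sg)).trace = (S * Sg * Cᴴ * V⁻¹ * C * Sg).trace := by
    simp only [Matrix.mul_assoc]
  simp only [trace_add]
  linear_combination h1 - h2 + c3 - c4 - c1 - c2
end

section
/- Let n, p be positive natural numbers, A an n×n complex matrix, C a p×n complex matrix. Let V₁, V₂ be p×p positive definite Hermitian matrices and W₁, W₂ be n×n positive semidefinite Hermitian matrices with V₁ ⪯ V₂ and W₁ ⪯ W₂. Suppose Σ₁ and Σ₂ are positive semidefinite Hermitian matrices satisfying the filter algebraic Riccati equations A·Σᵢ + Σᵢ·Aᴴ − Σᵢ·Cᴴ·Vᵢ⁻¹·C·Σᵢ + Wᵢ = 0 for i = 1, 2, and that each closed-loop matrix A − Σᵢ·Cᴴ·Vᵢ⁻¹·C is Hurwitz. Then Σ₁ ⪯ Σ₂. -/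
/-!
Write `Kᵢ = Cᴴ Vᵢ⁻¹ C` and `Δ = Σ₂ - Σ₁`. Subtracting the Riccati equations shows that `Δ` solves
the Lyapunov equation `F Δ + Δ Fᴴ + Q = 0` for the Hurwitz closed-loop matrix `F = A - Σ₂ K₂`,
with `Q = Δ K₂ Δ + Σ₁ (K₁ - K₂) Σ₁ + (W₂ - W₁)`; here `K₁ ⪰ K₂` because matrix inversion is
operator antitone, so `Q ⪰ 0`. A Lyapunov equation with Hurwitz `F` and `Q ⪰ 0` forces `Δ ⪰ 0`:
the Cayley transform `G = (1 - F)⁻¹ (1 + F)` has spectral radius `< 1` and satisfies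
`Δ - G Δ Gᴴ ⪰ 0`, so `Δ ⪰ Gᵏ Δ (Gᵏ)ᴴ → 0`.
-/

open Matrix
open scoped ComplexOrder

/-- A square complex matrix is Hurwitz if every eigenvalue has
strictly negative real part. -/
def IsHurwitz {n : ℕ} (M : Matrix (Fin n) (Fin n) ℂ) : Prop :=
  ∀ z ∈ spectrum ℂ M, z.re < 0

open Filter Topology
open scoped NNReal

theorem Complex.norm_lt_one_of_re_div_neg {μ : ℂ} (h : ((μ - 1) / (μ + 1)).re < 0) :
    ‖μ‖ < 1 := by
  have hre : ((μ - 1) / (μ + 1)).re = (‖μ‖ ^ 2 - 1) / normSq (μ + 1) := by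
    rw [div_re, Complex.sq_norm, normSq_apply, normSq_apply]
    simp only [sub_re, add_re, one_re, sub_im, add_im, one_im]
    ring
  rw [hre, div_neg_iff] at h
  rcases h with ⟨-, h⟩ | ⟨h, -⟩
  · exact (h.not_ge (normSq_nonneg _)).elim
  · nlinarith [norm_nonneg μ]

section Cayley

variable {A : Type*} [Ring A] [Algebra ℂ A] {F : A}

theorem spectrum.isUnit_one_sub_of_forall_re_neg (hF : ∀ z ∈ spectrum ℂ F, z.re < 0) :
    IsUnit (1 - F) := by
  simpa using spectrum.notMem_iff.1 fun h1 => (hF 1 h1).not_ge zero_le_one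

theorem spectrum.norm_lt_one_of_re_neg_cayley (hF : ∀ z ∈ spectrum ℂ F, z.re < 0) :
    ∀ μ ∈ spectrum ℂ (Ring.inverse (1 - F) * (1 + F)), ‖μ‖ < 1 := by
  obtain ⟨u, hu⟩ := spectrum.isUnit_one_sub_of_forall_re_neg hF
  intro μ hμ
  have hμ' : ¬IsUnit ((μ - 1) • (1 : A) - (μ + 1) • F) := by
    have : algebraMap ℂ A μ - Ring.inverse (1 - F) * (1 + F) =
        ↑u⁻¹ * ((μ - 1) • (1 : A) - (μ + 1) • F) := by
      have : (μ - 1) • (1 : A) - (μ + 1) • F = μ • (u : A) - (1 + F) := by rw [hu]; module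
      rw [this, mul_sub, mul_smul_comm, Units.inv_mul, ← hu, Ring.inverse_unit,
        Algebra.algebraMap_eq_smul_one]
    rwa [spectrum.mem_iff, this, Units.isUnit_units_mul] at hμ
  have hμ1 : μ + 1 ≠ 0 := by
    rintro h
    rw [h, zero_smul, sub_zero, show μ - 1 = -2 by linear_combination h] at hμ'
    exact hμ' ((isUnit_smul_iff (Units.mk0 (-2 : ℂ) (by norm_num)) 1).2 isUnit_one)
  refine Complex.norm_lt_one_of_re_div_neg (hF _ ?_)
  rw [spectrum.mem_iff, Algebra.algebraMap_eq_smul_one]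
  contrapose! hμ'
  convert (isUnit_smul_iff (Units.mk0 _ hμ1) _).2 hμ' using 1
  rw [Units.smul_mk0, smul_sub, smul_smul, mul_div_cancel₀ _ hμ1]

end Cayley

/-- By Gelfand's formula, `‖a ^ k‖ ≤ r ^ k` eventually for any `r` above the spectral radius. -/
theorem spectrum.tendsto_pow_atTop_nhds_zero {A : Type*} [NormedRing A] [NormedAlgebra ℂ A]
    [CompleteSpace A] {a : A} (h : ∀ μ ∈ spectrum ℂ a, ‖μ‖ < 1) :
    Tendsto (a ^ ·) atTop (𝓝 0) := by
  cases subsingleton_or_nontrivial A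
  · simp [Subsingleton.elim _ (0 : A)]
  have hρ : spectralRadius ℂ a < (1 : ℝ≥0) :=
    spectrum.spectralRadius_lt_of_forall_lt a fun μ hμ => by exact_mod_cast h μ hμ
  obtain ⟨r, hρr, hr1⟩ := ENNReal.lt_iff_exists_nnreal_btwn.1 hρ
  have hbound : ∀ᶠ k : ℕ in atTop, ‖a ^ k‖ ≤ (r : ℝ) ^ k := by
    filter_upwards [(pow_nnnorm_pow_one_div_tendsto_nhds_spectralRadius a).eventually_lt_const
      hρr, eventually_ge_atTop 1] with k hk hk1
    rw [one_div, ENNReal.rpow_inv_lt_iff (by positivity), ENNReal.rpow_natCast] at hk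
    exact_mod_cast hk.le
  exact squeeze_zero_norm' hbound
    (tendsto_pow_atTop_nhds_zero_of_lt_one r.coe_nonneg (by exact_mod_cast hr1))

theorem nonneg_of_stein {R : Type*} [Ring R] [StarRing R] [PartialOrder R] [StarOrderedRing R]
    [TopologicalSpace R] [IsTopologicalRing R] [ContinuousStar R] [ClosedIciTopology R]
    {G Δ : R} (hG : Tendsto (G ^ ·) atTop (𝓝 0)) (h : 0 ≤ Δ - G * Δ * star G) : 0 ≤ Δ := by
  have hpow : ∀ k : ℕ, 0 ≤ Δ - G ^ k * Δ * star (G ^ k) := by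
    intro k
    induction k with
    | zero => simp
    | succ k ih =>
      have : Δ - G ^ (k + 1) * Δ * star (G ^ (k + 1)) =
          (Δ - G * Δ * star G) + G * (Δ - G ^ k * Δ * star (G ^ k)) * star G := by
        rw [pow_succ', star_mul]; noncomm_ring
      rw [this]
      exact add_nonneg h (star_right_conjugate_nonneg ih G)
  have hlim : Tendsto (fun k : ℕ => Δ - G ^ k * Δ * star (G ^ k)) atTop (𝓝 Δ) := by
    simpa using tendsto_const_nhds.sub ((hG.mul_const Δ).mul hG.star)
  exact ge_of_tendsto' hlim hpow

theorem CStarAlgebra.nonneg_of_lyapunov {A : Type*} [CStarAlgebra A] [PartialOrder A]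
    [StarOrderedRing A] {F Δ Q : A} (hF : ∀ z ∈ spectrum ℂ F, z.re < 0) (hQ : 0 ≤ Q)
    (h : F * Δ + Δ * star F + Q = 0) : 0 ≤ Δ := by
  set M := Ring.inverse (1 - F)
  have hM : M * (1 - F) = 1 :=
    Ring.inverse_mul_cancel _ (spectrum.isUnit_one_sub_of_forall_re_neg hF)
  refine nonneg_of_stein (G := M * (1 + F))
    (spectrum.tendsto_pow_atTop_nhds_zero (spectrum.norm_lt_one_of_re_neg_cayley hF)) ?_
  have hΔ : Δ = M * (1 - F) * Δ * star (M * (1 - F)) := by rw [hM, star_one, one_mul, mul_one]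
  have hstein : Δ - M * (1 + F) * Δ * star (M * (1 + F)) = M * (Q + Q) * star M := by
    rw [eq_neg_of_add_eq_zero_right h]
    nth_rewrite 1 [hΔ]
    simp only [star_mul, star_sub, star_add, star_one]
    noncomm_ring
  rw [hstein]
  exact star_right_conjugate_nonneg (add_nonneg hQ hQ) M

section Matrix

open scoped MatrixOrder Matrix.Norms.L2Operator

variable {ι : Type*} [Fintype ι] [DecidableEq ι]

theorem Matrix.posSemidef_of_lyapunov {F Δ Q : Matrix ι ι ℂ}
    (hF : ∀ z ∈ spectrum ℂ F, z.re < 0) (hQ : Q.PosSemidef) (h : F * Δ + Δ * Fᴴ + Q = 0) :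
    Δ.PosSemidef :=
  nonneg_iff_posSemidef.1 (CStarAlgebra.nonneg_of_lyapunov hF hQ.nonneg h)

theorem Matrix.PosDef.posSemidef_inv_sub_inv {V₁ V₂ : Matrix ι ι ℂ} (hV₁ : V₁.PosDef)
    (hV : (V₂ - V₁).PosSemidef) : (V₁⁻¹ - V₂⁻¹).PosSemidef := by
  rw [← le_iff, nonsing_inv_eq_ringInverse, nonsing_inv_eq_ringInverse]
  exact CStarAlgebra.ringInverse_le_ringInverse hV hV₁.isStrictlyPositive

end Matrix

theorem lyapunov_of_riccati_sub_riccati {R : Type*} [Ring R] [StarRing R]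
    {A S₁ S₂ K₁ K₂ W₁ W₂ : R} (hS₁ : IsSelfAdjoint S₁) (hS₂ : IsSelfAdjoint S₂)
    (hK₂ : IsSelfAdjoint K₂)
    (h₁ : A * S₁ + S₁ * star A - S₁ * K₁ * S₁ + W₁ = 0)
    (h₂ : A * S₂ + S₂ * star A - S₂ * K₂ * S₂ + W₂ = 0) :
    (A - S₂ * K₂) * (S₂ - S₁) + (S₂ - S₁) * star (A - S₂ * K₂) +
      (star (S₂ - S₁) * K₂ * (S₂ - S₁) + star S₁ * (K₁ - K₂) * S₁ + (W₂ - W₁)) = 0 := by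
  rw [star_sub, star_mul, star_sub, hS₁.star_eq, hS₂.star_eq, hK₂.star_eq]
  calc _ = (A * S₂ + S₂ * star A - S₂ * K₂ * S₂ + W₂) -
        (A * S₁ + S₁ * star A - S₁ * K₁ * S₁ + W₁) := by noncomm_ring
    _ = 0 := by rw [h₁, h₂, sub_zero]

theorem filter_riccati_solution_monotone_general {n p : ℕ}
    (A : Matrix (Fin n) (Fin n) ℂ) (C : Matrix (Fin p) (Fin n) ℂ)
    (V₁ V₂ : Matrix (Fin p) (Fin p) ℂ) (hV₁ : V₁.PosDef) (hV₂ : V₂.PosDef)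
    (W₁ W₂ : Matrix (Fin n) (Fin n) ℂ)
    (hV : (V₂ - V₁).PosSemidef) (hW : (W₂ - W₁).PosSemidef)
    (S₁ S₂ : Matrix (Fin n) (Fin n) ℂ) (hS1 : S₁.PosSemidef) (hS₂ : S₂.PosSemidef)
    (hRic₁ : A * S₁ + S₁ * Aᴴ - S₁ * Cᴴ * V₁⁻¹ * C * S₁ + W₁ = 0)
    (hRic₂ : A * S₂ + S₂ * Aᴴ - S₂ * Cᴴ * V₂⁻¹ * C * S₂ + W₂ = 0)
    (hHur₂ : IsHurwitz (A - S₂ * Cᴴ * V₂⁻¹ * C)) :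
    (S₂ - S₁).PosSemidef := by
  set K₁ := Cᴴ * V₁⁻¹ * C
  set K₂ := Cᴴ * V₂⁻¹ * C
  have hK₂ : K₂.PosSemidef := hV₂.inv.posSemidef.conjTranspose_mul_mul_same C
  have hK : (K₁ - K₂).PosSemidef := by
    simpa only [K₁, K₂, Matrix.mul_sub, Matrix.sub_mul, Matrix.mul_assoc] using
      (hV₁.posSemidef_inv_sub_inv hV).conjTranspose_mul_mul_same C
  have hQ : ((S₂ - S₁)ᴴ * K₂ * (S₂ - S₁) + S₁ᴴ * (K₁ - K₂) * S₁ + (W₂ - W₁)).PosSemidef :=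
    ((hK₂.conjTranspose_mul_mul_same _).add (hK.conjTranspose_mul_mul_same _)).add hW
  have hF : ∀ z ∈ spectrum ℂ (A - S₂ * K₂), z.re < 0 := by
    simpa only [IsHurwitz, K₂, Matrix.mul_assoc] using hHur₂
  refine posSemidef_of_lyapunov hF hQ
    (lyapunov_of_riccati_sub_riccati hS1.isHermitian hS₂.isHermitian hK₂.isHermitian ?_ ?_)
  · simpa only [K₁, Matrix.mul_assoc, star_eq_conjTranspose] using hRic₁
  · simpa only [K₂, Matrix.mul_assoc, star_eq_conjTranspose] using hRic₂

/-- The stabilizing solution of the continuous-time filter algebraic Riccati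
equation is monotone in the noise covariances `V` and `W` (Lemma 4). -/
theorem filter_riccati_solution_monotone {n p : ℕ} (hn : 0 < n) (hp : 0 < p)
    (A : Matrix (Fin n) (Fin n) ℂ) (C : Matrix (Fin p) (Fin n) ℂ)
    (V₁ V₂ : Matrix (Fin p) (Fin p) ℂ) (hV₁ : V₁.PosDef) (hV₂ : V₂.PosDef)
    (W₁ W₂ : Matrix (Fin n) (Fin n) ℂ) (hW₁ : W₁.PosSemidef) (hW₂ : W₂.PosSemidef)
    (hV : (V₂ - V₁).PosSemidef) (hW : (W₂ - W₁).PosSemidef)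
    (S₁ S₂ : Matrix (Fin n) (Fin n) ℂ) (hS1 : S₁.PosSemidef) (hS₂ : S₂.PosSemidef)
    (hRic₁ : A * S₁ + S₁ * Aᴴ - S₁ * Cᴴ * V₁⁻¹ * C * S₁ + W₁ = 0)
    (hRic₂ : A * S₂ + S₂ * Aᴴ - S₂ * Cᴴ * V₂⁻¹ * C * S₂ + W₂ = 0)
    (hHur₁ : IsHurwitz (A - S₁ * Cᴴ * V₁⁻¹ * C))
    (hHur₂ : IsHurwitz (A - S₂ * Cᴴ * V₂⁻¹ * C)) :
    (S₂ - S₁).PosSemidef :=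
  filter_riccati_solution_monotone_general A C V₁ V₂ hV₁ hV₂ W₁ W₂ hV hW S₁ S₂ hS1 hS₂ hRic₁ hRic₂
    hHur₂
end

section
/- Let n be a positive natural number, let M be an n×n complex Hurwitz matrix, and let N be an n×n positive semidefinite Hermitian matrix. Then the function s ↦ exp(s·M)·N·exp(s·Mᴴ) is integrable on (0, ∞), and the matrix F := ∫₀^∞ exp(s·M)·N·exp(s·Mᴴ) ds is a positive semidefinite Hermitian matrix satisfying the continuous-time Lyapunov equation M·F + F·Mᴴ + N = 0. -/
/-!
Every vector is a sum of generalized eigenvectors of `M`, and on a generalized eigenvector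
for `μ` the flow `exp (s • M)` is `exp (s μ)` times a polynomial in `s`; so when all eigenvalues
have real part below `-ε`, `exp (s • M) = O(exp (-ε s))`. The integrand
`Φ s = exp (s • M) * N * (exp (s • M))ᴴ` is then `O(exp (-2 ε s))`, hence integrable, and each
`Φ s` is positive semidefinite, hence so is `F = ∫ Φ`. Finally `Φ' = M Φ + Φ Mᴴ`, so integrating
over `(0, ∞)` gives `M F + F Mᴴ = Φ ∞ - Φ 0 = -N`.
-/

open Matrix MeasureTheory NormedSpace
open scoped ComplexOrder

/-- The (entrywise) integral `∫₀^∞ exp(s M) N exp(s Mᴴ) ds`. -/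
noncomputable def lyapunovIntegral {n : ℕ} (M N : Matrix (Fin n) (Fin n) ℂ) :
    Matrix (Fin n) (Fin n) ℂ :=
  fun i j => ∫ s in Set.Ioi (0 : ℝ), (exp (s • M) * N * exp (s • Mᴴ)) i j

open Asymptotics Filter Set Topology
open scoped Nat MatrixOrder Matrix.Norms.L2Operator

section ExpDecay

variable {𝕜 n : Type*} [RCLike 𝕜] [Fintype n] [DecidableEq n]

theorem exp_smul_mulVec_eq_sum {A : Matrix n n 𝕜} {v : n → 𝕜} {k : ℕ}
    (hv : (A ^ k) *ᵥ v = 0) (t : 𝕜) :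
    exp (t • A) *ᵥ v = ∑ l ∈ Finset.range k, (t ^ l / l !) • (A ^ l *ᵥ v) := by
  have hterm (l : ℕ) : ((l ! : 𝕜)⁻¹ • (t • A) ^ l) *ᵥ v = (t ^ l / l !) • (A ^ l *ᵥ v) := by
    rw [smul_pow, smul_smul, smul_mulVec, div_eq_inv_mul]
  have hseries := (exp_series_hasSum_exp' (𝕂 := 𝕜) (t • A)).map
    (AddMonoidHom.mk' (· *ᵥ v) fun A B => add_mulVec A B v)
    (continuous_id.matrix_mulVec continuous_const)
  refine hseries.unique (hasSum_sum_of_ne_finset_zero fun l hl => ?_) |>.trans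
    (Finset.sum_congr rfl fun l _ => hterm l)
  obtain ⟨j, rfl⟩ := Nat.exists_eq_add_of_le' (not_lt.1 (Finset.mem_range.not.1 hl))
  change ((_ : 𝕜)⁻¹ • (t • A) ^ (j + k)) *ᵥ v = 0
  rw [hterm, pow_add A, ← mulVec_mulVec, hv, mulVec_zero, smul_zero]

theorem Matrix.isBigO_of_forall_mulVec_single {α : Type*} {l : Filter α}
    {f : α → Matrix n n 𝕜} {g : α → ℝ} (h : ∀ j, (fun x => f x *ᵥ Pi.single j 1) =O[l] g) :
    f =O[l] g := by
  let L : (n → n → 𝕜) →L[𝕜] Matrix n n 𝕜 :=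
    LinearMap.toContinuousLinearMap (ofLinearEquiv 𝕜).toLinearMap
  refine (L.isBigO_comp (fun x i j => f x i j) l).trans
    (isBigO_pi.2 fun i => isBigO_pi.2 fun j => ?_)
  simpa only [mulVec_single_one, col_apply] using isBigO_pi.1 (h j) i

theorem isBigO_cexp_mul_pow {μ : ℂ} {ε : ℝ} (hμ : μ.re < -ε) (l : ℕ) :
    (fun s : ℝ => Complex.exp (s * μ) * (s : ℂ) ^ l) =O[atTop] fun s => Real.exp (-ε * s) := by
  have hexp : (fun s : ℝ => Complex.exp (s * μ)) =O[atTop] fun s => Real.exp (μ.re * s) :=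
    isBigO_of_le _ fun s => by simp [Complex.norm_exp, mul_comm]
  have hpow : (fun s : ℝ => (s : ℂ) ^ l) =O[atTop] fun s => Real.exp ((-ε - μ.re) * s) :=
    (isBigO_of_le _ fun s => by simp).trans
      (isLittleO_pow_exp_pos_mul_atTop l (by linarith : 0 < -ε - μ.re)).isBigO
  refine (hexp.mul hpow).congr_right fun s => ?_
  rw [← Real.exp_add]; ring_nf

theorem exp_smul_eq_cexp_smul_exp_smul_sub (M : Matrix n n ℂ) (μ t : ℂ) :
    exp (t • M) = Complex.exp (t * μ) • exp (t • (M - μ • 1)) := by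
  have hsplit : t • M = algebraMap ℂ _ (t * μ) + t • (M - μ • 1) := by
    rw [Algebra.algebraMap_eq_smul_one, smul_sub, smul_smul, add_sub_cancel]
  rw [hsplit, Matrix.exp_add_of_commute _ _ (Algebra.commute_algebraMap_left _ _),
    ← algebraMap_exp_comm, ← Algebra.smul_def, Complex.exp_eq_exp_ℂ]

theorem isBigO_exp_smul_mulVec_of_pow_sub_mulVec_eq_zero {M : Matrix n n ℂ} {μ : ℂ} {ε : ℝ}
    (hμ : μ.re < -ε) {k : ℕ} {v : n → ℂ} (hv : ((M - μ • 1) ^ k) *ᵥ v = 0) :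
    (fun s : ℝ => exp (s • M) *ᵥ v) =O[atTop] fun s => Real.exp (-ε * s) := by
  have hsum (s : ℝ) : exp (s • M) *ᵥ v = ∑ l ∈ Finset.range k,
      (Complex.exp (s * μ) * (s : ℂ) ^ l) • ((l ! : ℂ)⁻¹ • ((M - μ • 1) ^ l *ᵥ v)) := by
    rw [← Complex.coe_smul, exp_smul_eq_cexp_smul_exp_smul_sub M μ, smul_mulVec,
      exp_smul_mulVec_eq_sum hv, Finset.smul_sum]
    simp only [smul_smul, div_eq_mul_inv, mul_assoc]
  simp only [hsum]
  refine IsBigO.fun_sum fun l _ => ?_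
  simpa only [smul_eq_mul, mul_one] using (isBigO_cexp_mul_pow hμ l).smul
    (isBigO_const_const ((l ! : ℂ)⁻¹ • ((M - μ • 1) ^ l *ᵥ v)) (one_ne_zero (α := ℝ)) atTop)

theorem isBigO_exp_smul_mulVec {M : Matrix n n ℂ} {ε : ℝ}
    (hε : ∀ μ ∈ spectrum ℂ M, μ.re < -ε) (v : n → ℂ) :
    (fun s : ℝ => exp (s • M) *ᵥ v) =O[atTop] fun s => Real.exp (-ε * s) := by
  have hzero : (fun s : ℝ => exp (s • M) *ᵥ (0 : n → ℂ)) =O[atTop]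
      fun s => Real.exp (-ε * s) := by
    simpa only [mulVec_zero] using isBigO_zero _ _
  have hv : v ∈ ⨆ μ, Module.End.maxGenEigenspace (toLinAlgEquiv' M) μ := by
    rw [Module.End.iSup_maxGenEigenspace_eq_top]; trivial
  refine Submodule.iSup_induction (motive := fun v =>
    (fun s : ℝ => exp (s • M) *ᵥ v) =O[atTop] fun s => Real.exp (-ε * s)) _ hv
    (fun μ w hw => ?_) hzero fun x y hx hy => by simpa only [mulVec_add] using hx.add hy
  rcases eq_or_ne w 0 with rfl | hw0
  · exact hzero
  obtain ⟨k, hk⟩ := (Module.End.mem_maxGenEigenspace _ _ _).1 hw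
  have hμ : μ ∈ spectrum ℂ M := by
    rw [← AlgEquiv.spectrum_eq toLinAlgEquiv' M]
    exact (Module.End.HasUnifEigenvalue.lt one_pos
      ((Submodule.ne_bot_iff _).2 ⟨w, hw, hw0⟩)).mem_spectrum
  refine isBigO_exp_smul_mulVec_of_pow_sub_mulVec_eq_zero (hε μ hμ) (k := k) ?_
  simpa only [← map_one toLinAlgEquiv', ← map_smul, ← map_sub, ← map_pow,
    toLinAlgEquiv'_apply] using hk

theorem isBigO_exp_smul {M : Matrix n n ℂ} {ε : ℝ} (hε : ∀ μ ∈ spectrum ℂ M, μ.re < -ε) :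
    (fun s : ℝ => exp (s • M)) =O[atTop] fun s => Real.exp (-ε * s) :=
  isBigO_of_forall_mulVec_single fun _ => isBigO_exp_smul_mulVec hε _

end ExpDecay

theorem IsHurwitz.exists_forall_re_lt_neg {n : ℕ} {M : Matrix (Fin n) (Fin n) ℂ}
    (hM : IsHurwitz M) : ∃ ε > 0, ∀ μ ∈ spectrum ℂ M, μ.re < -ε := by
  have h : ∀ᶠ ε in 𝓝[>] (0 : ℝ), ∀ μ ∈ spectrum ℂ M, μ.re < -ε :=
    M.finite_spectrum.eventually_all.2 fun μ hμ => nhdsWithin_le_nhds <|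
      (continuous_neg.tendsto' 0 0 neg_zero).eventually (lt_mem_nhds (hM μ hμ))
  exact (h.and self_mem_nhdsWithin).exists.imp fun ε hε => ⟨hε.2, hε.1⟩

theorem integrableOn_Ioi_of_isBigO_exp_neg {E : Type*} [NormedAddCommGroup E] {f : ℝ → E}
    {a b : ℝ} (hb : 0 < b) (hf : ContinuousOn f (Ici a))
    (ho : f =O[atTop] fun x => Real.exp (-b * x)) : IntegrableOn f (Ioi a) :=
  (integrable_norm_iff ((hf.mono Ioi_subset_Ici_self).aestronglyMeasurable measurableSet_Ioi)).1
    (integrable_of_isBigO_exp_neg hb hf.norm ho.norm_left)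

section LyapunovEquation

variable {𝔸 : Type*} [NormedRing 𝔸] [NormedAlgebra ℝ 𝔸] [CompleteSpace 𝔸]

theorem hasDerivAt_exp_smul_mul_mul_exp_smul (A N B : 𝔸) (t : ℝ) :
    HasDerivAt (fun s : ℝ => exp (s • A) * N * exp (s • B))
      (A * (exp (t • A) * N * exp (t • B)) + exp (t • A) * N * exp (t • B) * B) t := by
  refine (((hasDerivAt_exp_smul_const' A t).mul_const N).mul
    (hasDerivAt_exp_smul_const B t)).congr_deriv ?_
  simp only [mul_assoc]

theorem mul_integral_add_integral_mul_add_eq_zero {A N B : 𝔸}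
    (hint : IntegrableOn (fun s : ℝ => exp (s • A) * N * exp (s • B)) (Ioi 0))
    (hlim : Tendsto (fun s : ℝ => exp (s • A) * N * exp (s • B)) atTop (𝓝 0)) :
    A * (∫ s in Ioi (0 : ℝ), exp (s • A) * N * exp (s • B)) +
      (∫ s in Ioi (0 : ℝ), exp (s • A) * N * exp (s • B)) * B + N = 0 := by
  rw [← integral_const_mul_of_integrable hint, ← integral_mul_const_of_integrable hint,
    ← integral_add (hint.const_mul A) (hint.mul_const B),
    integral_Ioi_of_hasDerivAt_of_tendsto' (fun t _ => hasDerivAt_exp_smul_mul_mul_exp_smul A N B t)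
      ((hint.const_mul A).add (hint.mul_const B)) hlim]
  simp

end LyapunovEquation

section MatrixIntegral

variable {m n X : Type*} [Fintype m] [Fintype n] [DecidableEq n] [MeasurableSpace X]
  {μ : Measure X} {f : X → Matrix m n ℂ}

theorem MeasureTheory.Integrable.matrix_apply (hf : Integrable f μ) (i : m) (j : n) :
    Integrable (fun x => f x i j) μ :=
  (entryLinearMap ℂ ℂ i j).toContinuousLinearMap.integrable_comp hf

theorem integral_matrix_apply (hf : Integrable f μ) (i : m) (j : n) :
    (∫ x, f x ∂μ) i j = ∫ x, f x i j ∂μ :=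
  ((entryLinearMap ℂ ℂ i j).toContinuousLinearMap.integral_comp_comm hf).symm

theorem posSemidef_integral {f : X → Matrix n n ℂ}
    (hf : ∀ x, (f x).PosSemidef) : (∫ x, f x ∂μ).PosSemidef :=
  nonneg_iff_posSemidef.1 (integral_nonneg fun x => (hf x).nonneg)

end MatrixIntegral

section Lyapunov

variable {n : Type*} [Fintype n] [DecidableEq n]

theorem exp_smul_conjTranspose (s : ℝ) (M : Matrix n n ℂ) :
    exp (s • Mᴴ) = (exp (s • M))ᴴ := by
  rw [← exp_conjTranspose, conjTranspose_smul, star_trivial]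

theorem isBigO_exp_smul_mul_mul_exp_smul_conjTranspose {M : Matrix n n ℂ} {ε : ℝ}
    (hε : ∀ μ ∈ spectrum ℂ M, μ.re < -ε) (N : Matrix n n ℂ) :
    (fun s : ℝ => exp (s • M) * N * exp (s • Mᴴ)) =O[atTop]
      fun s => Real.exp (-(2 * ε) * s) := by
  have hE := isBigO_exp_smul hε
  have hEH : (fun s : ℝ => exp (s • Mᴴ)) =O[atTop] fun s => Real.exp (-ε * s) :=
    (isBigO_of_le _ fun s => by rw [exp_smul_conjTranspose, l2_opNorm_conjTranspose]).trans hE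
  refine ((hE.mul (isBigO_const_const N (one_ne_zero (α := ℝ)) atTop)).mul hEH).congr_right
    fun s => ?_
  rw [mul_one, ← Real.exp_add]; ring_nf

end Lyapunov

theorem lyapunov_integral_solution_general {n : ℕ}
    (M : Matrix (Fin n) (Fin n) ℂ) (hM : IsHurwitz M)
    (N : Matrix (Fin n) (Fin n) ℂ) (hN : N.PosSemidef) :
    (∀ i j, IntegrableOn
        (fun s : ℝ => (exp (s • M) * N * exp (s • Mᴴ)) i j) (Set.Ioi 0)) ∧
      (lyapunovIntegral M N).PosSemidef ∧
      M * lyapunovIntegral M N + lyapunovIntegral M N * Mᴴ + N = 0 := by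
  obtain ⟨ε, hε, hspec⟩ := hM.exists_forall_re_lt_neg
  have hO := isBigO_exp_smul_mul_mul_exp_smul_conjTranspose hspec N
  have hcont : Continuous fun s : ℝ => exp (s • M) * N * exp (s • Mᴴ) :=
    continuous_iff_continuousAt.2 fun t =>
      (hasDerivAt_exp_smul_mul_mul_exp_smul M N Mᴴ t).continuousAt
  have hint : IntegrableOn (fun s : ℝ => exp (s • M) * N * exp (s • Mᴴ)) (Ioi 0) :=
    integrableOn_Ioi_of_isBigO_exp_neg (by positivity) hcont.continuousOn hO
  have hlim : Tendsto (fun s : ℝ => exp (s • M) * N * exp (s • Mᴴ)) atTop (𝓝 0) :=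
    hO.trans_tendsto <| Real.tendsto_exp_atBot.comp <|
      tendsto_id.const_mul_atTop_of_neg (by linarith)
  have hF : lyapunovIntegral M N = ∫ s in Ioi (0 : ℝ), exp (s • M) * N * exp (s • Mᴴ) := by
    ext i j; exact (integral_matrix_apply hint i j).symm
  refine ⟨Integrable.matrix_apply hint, hF ▸ posSemidef_integral fun s => ?_,
    hF ▸ mul_integral_add_integral_mul_add_eq_zero hint hlim⟩
  rw [exp_smul_conjTranspose]
  exact hN.mul_mul_conjTranspose_same _

/-- For a Hurwitz matrix `M` and PSD `N`, the integrand
`s ↦ exp(s M) N exp(s Mᴴ)` is integrable on `(0, ∞)` and its integral `F` is a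
positive semidefinite Hermitian solution of `M F + F Mᴴ + N = 0`. -/
theorem lyapunov_integral_solution {n : ℕ} (hn : 0 < n)
    (M : Matrix (Fin n) (Fin n) ℂ) (hM : IsHurwitz M)
    (N : Matrix (Fin n) (Fin n) ℂ) (hN : N.PosSemidef) :
    (∀ i j, IntegrableOn
        (fun s : ℝ => (exp (s • M) * N * exp (s • Mᴴ)) i j) (Set.Ioi 0)) ∧
      (lyapunovIntegral M N).PosSemidef ∧
      M * lyapunovIntegral M N + lyapunovIntegral M N * Mᴴ + N = 0 :=
  lyapunov_integral_solution_general M hM N hN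
end

section
/- Let n, m, p be positive natural numbers and let A (n×n), B (n×m), C (p×n) be complex matrices. Let Q₀ be an n×n positive semidefinite Hermitian matrix, R₀ an m×m positive definite Hermitian matrix, V a p×p positive definite Hermitian matrix, and W an n×n positive semidefinite Hermitian matrix. Let Σ be a positive semidefinite Hermitian matrix solving A·Σ + Σ·Aᴴ − Σ·Cᴴ·V⁻¹·C·Σ + W = 0, and set L = Σ·Cᴴ·V⁻¹. For each real α > 0, let S_α be a positive semidefinite Hermitian matrix solving S·A + Aᴴ·S − α·S·B·R₀⁻¹·Bᴴ·S + α·Q₀ = 0, set K_α = α·R₀⁻¹·Bᴴ·S_α, assume A − B·K_α is Hurwitz, and let F_α be the positive semidefinite Hermitian solution of (A − B·K_α)·F + F·(A − B·K_α)ᴴ + L·V·Lᴴ = 0. Define P_track(α) = trace(Q₀·(Σ + F_α)) and P_effort(α) = α²·trace(S_α·B·R₀⁻¹·Bᴴ·S_α·F_α). Then for all 0 < α ≤ α′: P_track(α′) ≤ P_track(α) and P_effort(α) ≤ P_effort(α′). -/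
open Matrix
open scoped ComplexOrder

/-!
Completing the square in the control Riccati equation for the weight `a` shows that every gain
`K` whose closed loop has stationary covariance `F`, i.e. `(A - BK)F + F(A - BK)ᴴ + LVLᴴ = 0`,
satisfies
`a² tr(Q₀F) + tr(KᴴR₀KF) = tr((K - K_a)ᴴR₀(K - K_a)F) + a tr(S_a LVLᴴ)`,
so, as `R₀ ≻ 0` and `F ⪰ 0`, this cost is at least `a tr(S_a LVLᴴ)`, with equality at
`K = K_a`. For `α < α'`,
evaluating each of `K_α`, `K_α'` in the cost of the other weight gives two inequalities whose
sum reads `(α'² - α²)(tr(Q₀F_α) - tr(Q₀F_α')) ≥ 0`; this is the monotonicity of the tracking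
error, and the first inequality alone then bounds the increase of the effort from below by
`α²(tr(Q₀F_α) - tr(Q₀F_α')) ≥ 0`.
-/

namespace Matrix

section Riccati

variable {𝕜 n m : Type*} [CommRing 𝕜] [StarRing 𝕜] [Fintype n] [Fintype m] [DecidableEq m]

theorem trace_mul_eq_neg_of_lyapunov {M F N : Matrix n n 𝕜} (S : Matrix n n 𝕜)
    (h : M * F + F * Mᴴ + N = 0) :
    ((Mᴴ * S + S * M) * F).trace = -(S * N).trace := by
  rw [← trace_neg, ← Matrix.mul_neg, ← eq_neg_of_add_eq_zero_left h, Matrix.add_mul,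
    Matrix.mul_add, trace_add, trace_add, Matrix.mul_assoc, trace_mul_comm, Matrix.mul_assoc,
    Matrix.mul_assoc, add_comm]

variable {A S Q : Matrix n n 𝕜} {B : Matrix n m 𝕜} {R : Matrix m m 𝕜} {a : 𝕜}

theorem riccati_gain_cost (ha : IsSelfAdjoint a) (hS : S.IsHermitian) (hR : R.IsHermitian)
    (hRdet : IsUnit R.det) :
    (a • (R⁻¹ * Bᴴ * S))ᴴ * R * (a • (R⁻¹ * Bᴴ * S)) = a ^ 2 • (S * B * R⁻¹ * Bᴴ * S) := by
  simp only [conjTranspose_smul, conjTranspose_mul, conjTranspose_conjTranspose, hR.inv.eq,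
    hS.eq, ha.star_eq, Matrix.smul_mul, Matrix.mul_smul, smul_smul, Matrix.mul_assoc,
    mul_nonsing_inv_cancel_left _ _ hRdet]
  module

theorem riccati_completion_of_squares (ha : IsSelfAdjoint a) (hS : S.IsHermitian)
    (hR : R.IsHermitian) (hRdet : IsUnit R.det)
    (hCARE : S * A + Aᴴ * S - a • (S * B * R⁻¹ * Bᴴ * S) + a • Q = 0) (K : Matrix m n 𝕜) :
    a • ((A - B * K)ᴴ * S + S * (A - B * K)) + a ^ 2 • Q + Kᴴ * R * K
      = (K - a • (R⁻¹ * Bᴴ * S))ᴴ * R * (K - a • (R⁻¹ * Bᴴ * S)) := by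
  rw [← sub_eq_zero]
  calc _ = a • (S * A + Aᴴ * S - a • (S * B * R⁻¹ * Bᴴ * S) + a • Q) := ?_
    _ = 0 := by rw [hCARE, smul_zero]
  simp only [conjTranspose_sub, conjTranspose_smul, conjTranspose_mul,
    conjTranspose_conjTranspose, hR.inv.eq, hS.eq, ha.star_eq, Matrix.sub_mul, Matrix.mul_sub,
    Matrix.smul_mul, Matrix.mul_smul, smul_smul, smul_sub,
    smul_add, Matrix.mul_assoc, mul_nonsing_inv_cancel_left _ _ hRdet,
    nonsing_inv_mul_cancel_left _ _ hRdet]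
  module

theorem riccati_cost_identity (ha : IsSelfAdjoint a) (hS : S.IsHermitian) (hR : R.IsHermitian)
    (hRdet : IsUnit R.det) (hCARE : S * A + Aᴴ * S - a • (S * B * R⁻¹ * Bᴴ * S) + a • Q = 0)
    {K : Matrix m n 𝕜} {F N : Matrix n n 𝕜}
    (hLyap : (A - B * K) * F + F * (A - B * K)ᴴ + N = 0) :
    a ^ 2 * (Q * F).trace + (Kᴴ * R * K * F).trace
      = ((K - a • (R⁻¹ * Bᴴ * S))ᴴ * R * (K - a • (R⁻¹ * Bᴴ * S)) * F).trace
        + a * (S * N).trace := by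
  rw [← riccati_completion_of_squares ha hS hR hRdet hCARE K]
  rw [Matrix.add_mul, Matrix.add_mul, Matrix.smul_mul, Matrix.smul_mul, trace_add, trace_add,
    trace_smul, trace_smul, trace_mul_eq_neg_of_lyapunov S hLyap, smul_eq_mul, smul_eq_mul]
  ring

theorem riccati_cost_eq (ha : IsSelfAdjoint a) (hS : S.IsHermitian) (hR : R.IsHermitian)
    (hRdet : IsUnit R.det) (hCARE : S * A + Aᴴ * S - a • (S * B * R⁻¹ * Bᴴ * S) + a • Q = 0)
    {F N : Matrix n n 𝕜}
    (hLyap : (A - B * (a • (R⁻¹ * Bᴴ * S))) * F + F * (A - B * (a • (R⁻¹ * Bᴴ * S)))ᴴ + N = 0) :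
    a ^ 2 * (Q * F).trace + a ^ 2 * (S * B * R⁻¹ * Bᴴ * S * F).trace = a * (S * N).trace := by
  simpa only [riccati_gain_cost ha hS hR hRdet, Matrix.smul_mul, trace_smul, smul_eq_mul, sub_self,
    conjTranspose_zero, Matrix.zero_mul, trace_zero, zero_add]
    using riccati_cost_identity ha hS hR hRdet hCARE hLyap

end Riccati

section RCLike

variable {𝕜 n m : Type*} [RCLike 𝕜] [Fintype n] [Fintype m] [DecidableEq m]

theorem PosSemidef.trace_mul_nonneg {P Q : Matrix n n 𝕜} (hP : P.PosSemidef)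
    (hQ : Q.PosSemidef) : 0 ≤ (P * Q).trace := by
  classical
  open scoped MatrixOrder in
  obtain ⟨X, rfl⟩ := CStarAlgebra.nonneg_iff_eq_star_mul_self.mp hQ.nonneg
  rw [star_eq_conjTranspose, ← Matrix.mul_assoc, trace_mul_comm, ← Matrix.mul_assoc]
  exact (hP.mul_mul_conjTranspose_same X).trace_nonneg

theorem riccati_cost_le {A Q Sa Sb F N : Matrix n n 𝕜} {B : Matrix n m 𝕜} {R : Matrix m m 𝕜}
    {a b : 𝕜} (ha : IsSelfAdjoint a) (hb : IsSelfAdjoint b) (hSa : Sa.IsHermitian)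
    (hSb : Sb.IsHermitian) (hR : R.PosDef)
    (hCARE : Sa * A + Aᴴ * Sa - a • (Sa * B * R⁻¹ * Bᴴ * Sa) + a • Q = 0)
    (hLyap : (A - B * (b • (R⁻¹ * Bᴴ * Sb))) * F + F * (A - B * (b • (R⁻¹ * Bᴴ * Sb)))ᴴ + N = 0)
    (hF : F.PosSemidef) :
    a * (Sa * N).trace ≤ a ^ 2 * (Q * F).trace + b ^ 2 * (Sb * B * R⁻¹ * Bᴴ * Sb * F).trace := by
  have hRdet : IsUnit R.det := (isUnit_iff_isUnit_det R).mp hR.isUnit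
  have key := riccati_cost_identity ha hSa hR.isHermitian hRdet hCARE hLyap
  rw [riccati_gain_cost hb hSb hR.isHermitian hRdet, Matrix.smul_mul, trace_smul,
    smul_eq_mul] at key
  rw [key]
  exact le_add_of_nonneg_left ((hR.posSemidef.conjTranspose_mul_mul_same _).trace_mul_nonneg hF)

end RCLike

end Matrix

theorem le_and_le_of_cost_tradeoff {𝕜 : Type*} [CommRing 𝕜] [PartialOrder 𝕜]
    [IsStrictOrderedRing 𝕜] [PosMulReflectLE 𝕜] {a b ta tb ea eb na nb : 𝕜} (ha : 0 ≤ a)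
    (hlt : a < b) (haa : a ^ 2 * ta + ea = a * na) (hbb : b ^ 2 * tb + eb = b * nb)
    (hab : a * na ≤ a ^ 2 * tb + eb) (hba : b * nb ≤ b ^ 2 * ta + ea) :
    tb ≤ ta ∧ ea ≤ eb := by
  have hsq : 0 < b ^ 2 - a ^ 2 := sub_pos.mpr (pow_lt_pow_left₀ hlt ha two_ne_zero)
  have hprod : (b ^ 2 - a ^ 2) * 0 ≤ (b ^ 2 - a ^ 2) * (ta - tb) := by
    have := sub_nonneg.mpr (add_le_add hab hba)
    convert this using 1
    · ring
    · linear_combination -haa - hbb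
  have htrack : tb ≤ ta := sub_nonneg.mp (le_of_mul_le_mul_left hprod hsq)
  refine ⟨htrack, sub_nonneg.mp ?_⟩
  have := add_nonneg (sub_nonneg.mpr hab) (mul_nonneg (pow_nonneg ha 2) (sub_nonneg.mpr htrack))
  convert this using 1
  linear_combination -haa

theorem lqg_ct_track_decreasing_effort_increasing_general {n m p : ℕ}
    (A : Matrix (Fin n) (Fin n) ℂ) (B : Matrix (Fin n) (Fin m) ℂ)
    (Q₀ : Matrix (Fin n) (Fin n) ℂ)
    (R₀ : Matrix (Fin m) (Fin m) ℂ) (hR₀ : R₀.PosDef)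
    (V : Matrix (Fin p) (Fin p) ℂ)
    -- the filter Riccati solution Σ and the Kalman gain L
    (Sg : Matrix (Fin n) (Fin n) ℂ)
    (L : Matrix (Fin n) (Fin p) ℂ)
    -- the control Riccati solution S_α, gain K_α and covariance F_α for each α > 0
    (S F : ℝ → Matrix (Fin n) (Fin n) ℂ)
    (K : ℝ → Matrix (Fin m) (Fin n) ℂ)
    (hS : ∀ α : ℝ, 0 < α → (S α).PosSemidef)
    (hCARE : ∀ α : ℝ, 0 < α →
      S α * A + Aᴴ * S α - (α : ℂ) • (S α * B * R₀⁻¹ * Bᴴ * S α) + (α : ℂ) • Q₀ = 0)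
    (hK : ∀ α : ℝ, 0 < α → K α = (α : ℂ) • (R₀⁻¹ * Bᴴ * S α))
    (hF : ∀ α : ℝ, 0 < α → (F α).PosSemidef)
    (hLyap : ∀ α : ℝ, 0 < α →
      (A - B * K α) * F α + F α * (A - B * K α)ᴴ + L * V * Lᴴ = 0) :
    ∀ α α' : ℝ, 0 < α → α ≤ α' →
      (Q₀ * (Sg + F α')).trace ≤ (Q₀ * (Sg + F α)).trace ∧
      ((α : ℂ) ^ 2) * (S α * B * R₀⁻¹ * Bᴴ * S α * F α).trace
        ≤ ((α' : ℂ) ^ 2) * (S α' * B * R₀⁻¹ * Bᴴ * S α' * F α').trace := by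
  intro α α' hα hle
  have hreal : ∀ r : ℝ, IsSelfAdjoint (r : ℂ) := Complex.conj_ofReal
  have hRdet : IsUnit R₀.det := (isUnit_iff_isUnit_det R₀).mp hR₀.isUnit
  have hLyap' : ∀ a : ℝ, 0 < a →
      (A - B * ((a : ℂ) • (R₀⁻¹ * Bᴴ * S a))) * F a
        + F a * (A - B * ((a : ℂ) • (R₀⁻¹ * Bᴴ * S a)))ᴴ + L * V * Lᴴ = 0 :=
    fun a ha => hK a ha ▸ hLyap a ha
  have optimal : ∀ a : ℝ, 0 < a → _ := fun a ha =>
    riccati_cost_eq (hreal a) (hS a ha).isHermitian hR₀.isHermitian hRdet (hCARE a ha) (hLyap' a ha)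
  have suboptimal : ∀ a b : ℝ, 0 < a → 0 < b → _ := fun a b ha hb =>
    riccati_cost_le (hreal a) (hreal b) (hS a ha).isHermitian (hS b hb).isHermitian hR₀
      (hCARE a ha) (hLyap' b hb) (hF b hb)
  have hα' := hα.trans_le hle
  rcases hle.eq_or_lt with rfl | hlt
  · exact ⟨le_rfl, le_rfl⟩
  obtain ⟨htrack, heffort⟩ := le_and_le_of_cost_tradeoff (Complex.zero_le_real.mpr hα.le)
    (Complex.real_lt_real.mpr hlt) (optimal α hα) (optimal α' hα')
    (suboptimal α α' hα hα') (suboptimal α' α hα' hα)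
  refine ⟨?_, heffort⟩
  simpa only [Matrix.mul_add, trace_add, add_le_add_iff_left] using htrack

/-- Lemma 3 of the paper: with weights `Q(α) = α Q₀`, `R(α) = R₀ / α`, the
stationary tracking error `P_track(α) = tr (Q₀ (Σ + F_α))` is decreasing in `α`
and the stationary control effort
`P_effort(α) = α² tr (S_α B R₀⁻¹ Bᴴ S_α F_α)` is increasing in `α`. -/
theorem lqg_ct_track_decreasing_effort_increasing {n m p : ℕ}
    (hn : 0 < n) (hm : 0 < m) (hp : 0 < p)
    (A : Matrix (Fin n) (Fin n) ℂ) (B : Matrix (Fin n) (Fin m) ℂ)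
    (C : Matrix (Fin p) (Fin n) ℂ)
    (Q₀ : Matrix (Fin n) (Fin n) ℂ) (hQ₀ : Q₀.PosSemidef)
    (R₀ : Matrix (Fin m) (Fin m) ℂ) (hR₀ : R₀.PosDef)
    (V : Matrix (Fin p) (Fin p) ℂ) (hV : V.PosDef)
    (W : Matrix (Fin n) (Fin n) ℂ) (hW : W.PosSemidef)
    -- the filter Riccati solution Σ and the Kalman gain L
    (Sg : Matrix (Fin n) (Fin n) ℂ) (hSg : Sg.PosSemidef)
    (hFARE : A * Sg + Sg * Aᴴ - Sg * Cᴴ * V⁻¹ * C * Sg + W = 0)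
    (L : Matrix (Fin n) (Fin p) ℂ) (hL : L = Sg * Cᴴ * V⁻¹)
    -- the control Riccati solution S_α, gain K_α and covariance F_α for each α > 0
    (S F : ℝ → Matrix (Fin n) (Fin n) ℂ)
    (K : ℝ → Matrix (Fin m) (Fin n) ℂ)
    (hS : ∀ α : ℝ, 0 < α → (S α).PosSemidef)
    (hCARE : ∀ α : ℝ, 0 < α →
      S α * A + Aᴴ * S α - (α : ℂ) • (S α * B * R₀⁻¹ * Bᴴ * S α) + (α : ℂ) • Q₀ = 0)
    (hK : ∀ α : ℝ, 0 < α → K α = (α : ℂ) • (R₀⁻¹ * Bᴴ * S α))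
    (hHur : ∀ α : ℝ, 0 < α → IsHurwitz (A - B * K α))
    (hF : ∀ α : ℝ, 0 < α → (F α).PosSemidef)
    (hLyap : ∀ α : ℝ, 0 < α →
      (A - B * K α) * F α + F α * (A - B * K α)ᴴ + L * V * Lᴴ = 0) :
    ∀ α α' : ℝ, 0 < α → α ≤ α' →
      (Q₀ * (Sg + F α')).trace ≤ (Q₀ * (Sg + F α)).trace ∧
      ((α : ℂ) ^ 2) * (S α * B * R₀⁻¹ * Bᴴ * S α * F α).trace
        ≤ ((α' : ℂ) ^ 2) * (S α' * B * R₀⁻¹ * Bᴴ * S α' * F α').trace :=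
  lqg_ct_track_decreasing_effort_increasing_general A B Q₀ R₀ hR₀ V Sg L S F K hS hCARE hK hF hLyap
end

section
/- Let n be a positive natural number and M an n×n complex Schur stable matrix. Let N₁, N₂ be n×n positive semidefinite Hermitian matrices with N₁ ⪯ N₂, and suppose F₁, F₂ are Hermitian matrices satisfying Fᵢ = M·Fᵢ·Mᴴ + Nᵢ for i = 1, 2. Then F₁ ⪯ F₂. In particular (taking N₁ = N₂), the solution of the discrete-time Lyapunov equation with Schur stable M is unique. -/
/-!
The difference `D = F₂ - F₁` solves the Stein equation `D = M D Mᴴ + (N₂ - N₁)`, and iterating it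
gives `D - Mᵏ D (Mᵏ)ᴴ = ∑_{j<k} Mʲ (N₂ - N₁) (Mʲ)ᴴ ⪰ 0`. Schur stability means the spectral radius
of `M` is below `1`, so `Mᵏ → 0` by Gelfand's formula, and `D ⪰ 0` because the positive
semidefinite cone is closed.
-/

open Matrix Filter
open scoped ComplexOrder Topology

/-- A square complex matrix is Schur stable if every eigenvalue has modulus
strictly less than 1. -/
def IsSchurStable {n : ℕ} (M : Matrix (Fin n) (Fin n) ℂ) : Prop :=
  ∀ z ∈ spectrum ℂ M, ‖z‖ < 1

theorem tendsto_pow_atTop_nhds_zero_of_spectralRadius_lt_one {A : Type*} [NormedRing A]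
    [NormedAlgebra ℂ A] [CompleteSpace A] {a : A} (ha : spectralRadius ℂ a < 1) :
    Tendsto (a ^ ·) atTop (𝓝 0) := by
  obtain ⟨c, hac, hc1⟩ := ENNReal.lt_iff_exists_nnreal_btwn.mp ha
  have hbound : ∀ᶠ k : ℕ in atTop, ‖a ^ k‖ ≤ (c : ℝ) ^ k := by
    have hgelfand := spectrum.pow_nnnorm_pow_one_div_tendsto_nhds_spectralRadius a
    filter_upwards [hgelfand.eventually_lt_const hac, eventually_gt_atTop 0] with k hk hk0
    have := ENNReal.rpow_lt_rpow hk (by positivity : (0 : ℝ) < k)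
    rw [← ENNReal.rpow_mul, one_div_mul_cancel (by positivity), ENNReal.rpow_one,
      ENNReal.rpow_natCast, ← ENNReal.coe_pow, ENNReal.coe_lt_coe] at this
    exact_mod_cast this.le
  exact squeeze_zero_norm' hbound
    (tendsto_pow_atTop_nhds_zero_of_lt_one c.coe_nonneg (by exact_mod_cast hc1))

section
-- Any norm would do for Gelfand's formula; this one induces the usual entrywise topology.
attribute [local instance] Matrix.linftyOpNormedRing Matrix.linftyOpNormedAlgebra

theorem IsSchurStable.tendsto_pow_atTop_nhds_zero {n : ℕ} {M : Matrix (Fin n) (Fin n) ℂ}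
    (hM : IsSchurStable M) : Tendsto (M ^ ·) atTop (𝓝 0) := by
  rcases subsingleton_or_nontrivial (Matrix (Fin n) (Fin n) ℂ) with _ | _
  · simpa only [Subsingleton.elim _ (0 : Matrix (Fin n) (Fin n) ℂ)] using tendsto_const_nhds
  · refine tendsto_pow_atTop_nhds_zero_of_spectralRadius_lt_one ?_
    exact_mod_cast spectrum.spectralRadius_lt_of_forall_lt M (r := 1) fun z hz => by
      exact_mod_cast hM z hz

end

namespace Matrix

variable {n R : Type*} [Fintype n] [CommRing R] [PartialOrder R] [StarRing R]

theorem isClosed_setOf_posSemidef [TopologicalSpace R] [IsTopologicalRing R] [ContinuousStar R]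
    [OrderClosedTopology R] : IsClosed {A : Matrix n n R | A.PosSemidef} := by
  simp only [posSemidef_iff_dotProduct_mulVec, Set.ofPred_and, Set.ofPred_forall]
  refine (isClosed_eq continuous_id.matrix_conjTranspose continuous_id).inter
    (isClosed_iInter fun x => isClosed_Ici.preimage ?_)
  exact continuous_const.dotProduct (continuous_id.matrix_mulVec continuous_const)

variable [DecidableEq n] [AddLeftMono R] {M D : Matrix n n R}

theorem PosSemidef.sub_pow_mul_mul_conjTranspose_pow (h : (D - M * D * Mᴴ).PosSemidef) (k : ℕ) :
    (D - M ^ k * D * (M ^ k)ᴴ).PosSemidef := by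
  induction k with
  | zero => simpa using PosSemidef.zero
  | succ k ih =>
    have hsplit : D - M ^ (k + 1) * D * (M ^ (k + 1))ᴴ =
        (D - M ^ k * D * (M ^ k)ᴴ) + M ^ k * (D - M * D * Mᴴ) * (M ^ k)ᴴ := by
      rw [pow_succ, conjTranspose_mul]
      noncomm_ring
    rw [hsplit]
    exact ih.add (h.mul_mul_conjTranspose_same _)

theorem PosSemidef.of_sub_mul_mul_conjTranspose [TopologicalSpace R] [IsTopologicalRing R]
    [ContinuousStar R] [OrderClosedTopology R] (hM : Tendsto (M ^ ·) atTop (𝓝 0))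
    (h : (D - M * D * Mᴴ).PosSemidef) : D.PosSemidef := by
  have hlim : Tendsto (fun k : ℕ => D - M ^ k * D * (M ^ k)ᴴ) atTop (𝓝 D) := by
    have hcont : Continuous fun A : Matrix n n R => D - A * D * Aᴴ := by fun_prop
    simpa [Function.comp_def] using (hcont.tendsto 0).comp hM
  exact isClosed_setOf_posSemidef.mem_of_tendsto hlim
    (Eventually.of_forall h.sub_pow_mul_mul_conjTranspose_pow)

end Matrix

theorem discrete_lyapunov_solution_monotone_general {n : ℕ}
    (M : Matrix (Fin n) (Fin n) ℂ) (hM : IsSchurStable M)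
    (N₁ N₂ : Matrix (Fin n) (Fin n) ℂ)
    (hN : (N₂ - N₁).PosSemidef)
    (F₁ F₂ : Matrix (Fin n) (Fin n) ℂ)
    (hLyap₁ : F₁ = M * F₁ * Mᴴ + N₁) (hLyap₂ : F₂ = M * F₂ * Mᴴ + N₂) :
    (F₂ - F₁).PosSemidef := by
  have hStein : F₂ - F₁ - M * (F₂ - F₁) * Mᴴ = N₂ - N₁ := calc
    _ = (F₂ - M * F₂ * Mᴴ) - (F₁ - M * F₁ * Mᴴ) := by noncomm_ring
    _ = N₂ - N₁ := by
      rw [← eq_sub_of_add_eq' hLyap₁.symm, ← eq_sub_of_add_eq' hLyap₂.symm]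
  exact .of_sub_mul_mul_conjTranspose hM.tendsto_pow_atTop_nhds_zero (hStein ▸ hN)

/-- Monotonicity (and in particular uniqueness) of the solution of the
discrete-time Lyapunov equation `F = M F Mᴴ + N` with Schur stable `M` in the
inhomogeneity `N`. -/
theorem discrete_lyapunov_solution_monotone {n : ℕ} (hn : 0 < n)
    (M : Matrix (Fin n) (Fin n) ℂ) (hM : IsSchurStable M)
    (N₁ N₂ : Matrix (Fin n) (Fin n) ℂ) (hN₁ : N₁.PosSemidef) (hN₂ : N₂.PosSemidef)
    (hN : (N₂ - N₁).PosSemidef)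
    (F₁ F₂ : Matrix (Fin n) (Fin n) ℂ) (hF₁ : F₁.IsHermitian) (hF₂ : F₂.IsHermitian)
    (hLyap₁ : F₁ = M * F₁ * Mᴴ + N₁) (hLyap₂ : F₂ = M * F₂ * Mᴴ + N₂) :
    (F₂ - F₁).PosSemidef :=
  discrete_lyapunov_solution_monotone_general M hM N₁ N₂ hN F₁ F₂ hLyap₁ hLyap₂
end

section
/- Let n, m, p be positive natural numbers and let A (n×n), B (n×m), C (p×n) be complex matrices, Q₀ an n×n positive semidefinite Hermitian matrix, R₀ an m×m positive definite Hermitian matrix, V a p×p positive definite Hermitian matrix, and W an n×n positive semidefinite Hermitian matrix. Let Γ be a positive semidefinite Hermitian matrix solving Γ = A·Γ·Aᴴ − A·Γ·Cᴴ·(C·Γ·Cᴴ + V)⁻¹·C·Γ·Aᴴ + W, and set L = Γ·Cᴴ·(C·Γ·Cᴴ + V)⁻¹. For each real α > 0, let P_α be a positive semidefinite Hermitian matrix solving P = Aᴴ·P·A − (Aᴴ·P·B)·(R₀/α + Bᴴ·P·B)⁻¹·(Bᴴ·P·A) + α·Q₀, set K_α = (Bᴴ·P_α·B + R₀/α)⁻¹·Bᴴ·P_α·A,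 assume A − B·K_α is Schur stable, and let F_α be the positive semidefinite Hermitian solution of F = L·(C·Γ·Cᴴ + V)·Lᴴ + (A − B·K_α)·F·(A − B·K_α)ᴴ. Define P_track(α) = trace(Q₀·(Γ + F_α)) and P_effort(α) = trace(K_αᴴ·R₀·K_α·F_α). Then for all 0 < α ≤ α′: P_track(α′) ≤ P_track(α) and P_effort(α) ≤ P_effort(α′). -/
open Matrix
open scoped ComplexOrder

/-!
For the weights `(β Q₀, β⁻¹ R₀)` write `Jβ(K) = β·tr(Q₀ F_K) + β⁻¹·tr(Kᴴ R₀ K F_K)`, where `F_K` is the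
stationary covariance under the gain `K`, driven by the same noise `Σ = L (C Γ Cᴴ + V) Lᴴ` for all
gains. Completing the square with the Riccati equation and tracing against the Lyapunov equation gives
`Jβ(K) = tr(P_β Σ) + tr((K - K_β)ᴴ S_β (K - K_β) F_K)` with `S_β = β⁻¹ R₀ + Bᴴ P_β B` positive
definite, so `K_β` minimises `Jβ`. Adding the optimality inequalities of `K_α` against `K_α'` and of
`K_α'` against `K_α`, each multiplied by its weight, gives `(α'² - α²)(track α' - track α) ≤ 0`;
the monotonicity of the effort follows, and `tr(Q₀ Γ)` does not depend on `α`.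
-/

namespace Matrix

variable {𝕜 ι κ : Type*} [Fintype ι] [Fintype κ]

/-- Stationary LQ cost of the gain `K` when `F` is the state covariance of the closed loop. -/
def lqrCost [Mul 𝕜] [AddCommMonoid 𝕜] [Star 𝕜] (Q : Matrix ι ι 𝕜) (R : Matrix κ κ 𝕜)
    (K : Matrix κ ι 𝕜) (F : Matrix ι ι 𝕜) : 𝕜 :=
  (Q * F).trace + (Kᴴ * R * K * F).trace

open scoped MatrixOrder in
theorem PosSemidef.trace_mul_nonneg_s11 [RCLike 𝕜] {X Y : Matrix ι ι 𝕜}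
    (hX : X.PosSemidef) (hY : Y.PosSemidef) : 0 ≤ (X * Y).trace := by
  classical
  obtain ⟨S, rfl⟩ := CStarAlgebra.nonneg_iff_eq_star_mul_self.mp hY.nonneg
  rw [star_eq_conjTranspose, ← Matrix.mul_assoc, trace_mul_comm, ← Matrix.mul_assoc]
  exact (hX.mul_mul_conjTranspose_same S).trace_nonneg

section CommRing

variable [CommRing 𝕜] [StarRing 𝕜]

theorem lqrCost_smul_smul (c d : 𝕜) (Q : Matrix ι ι 𝕜) (R : Matrix κ κ 𝕜)
    (K : Matrix κ ι 𝕜) (F : Matrix ι ι 𝕜) :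
    lqrCost (c • Q) (d • R) K F = c * (Q * F).trace + d * (Kᴴ * R * K * F).trace := by
  simp only [lqrCost, Matrix.smul_mul, Matrix.mul_smul, trace_smul, smul_eq_mul]

theorem conjTranspose_mul_eq_of_mul_eq {A P : Matrix ι ι 𝕜} {B : Matrix ι κ 𝕜}
    {S : Matrix κ κ 𝕜} {K : Matrix κ ι 𝕜} (hP : P.IsHermitian) (hS : S.IsHermitian)
    (hSK : S * K = Bᴴ * P * A) : Kᴴ * S = Aᴴ * P * B := by
  rw [← hS.eq, ← conjTranspose_mul, hSK]
  simp only [conjTranspose_mul, conjTranspose_conjTranspose, hP.eq, Matrix.mul_assoc]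

theorem riccati_completion_of_squares_s11 {A P Q : Matrix ι ι 𝕜} {B : Matrix ι κ 𝕜}
    {R S : Matrix κ κ 𝕜} {K K₀ : Matrix κ ι 𝕜} (hP : P.IsHermitian) (hS : S.IsHermitian)
    (hSR : S = R + Bᴴ * P * B) (hSK₀ : S * K₀ = Bᴴ * P * A)
    (hare : P = Aᴴ * P * A - K₀ᴴ * S * K₀ + Q) :
    Q + Kᴴ * R * K = P - (A - B * K)ᴴ * P * (A - B * K) + (K - K₀)ᴴ * S * (K - K₀) := by
  have expand : (K - K₀)ᴴ * S * (K - K₀)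
      = Kᴴ * S * K - Kᴴ * (S * K₀) - K₀ᴴ * S * K + K₀ᴴ * S * K₀ := by
    simp only [conjTranspose_sub, Matrix.sub_mul, Matrix.mul_sub, Matrix.mul_assoc]
    abel
  rw [expand]
  nth_rewrite 1 [hare]
  -- keep `K₀ᴴ S K₀` opaque, so that `hSR` only expands `Kᴴ S K`
  generalize K₀ᴴ * S * K₀ = J
  rw [hSK₀, conjTranspose_mul_eq_of_mul_eq hP hS hSK₀, hSR]
  simp only [conjTranspose_sub, conjTranspose_mul, Matrix.sub_mul, Matrix.mul_sub,
    Matrix.add_mul, Matrix.mul_add, Matrix.mul_assoc]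
  abel

theorem trace_sub_conj_mul_eq_of_lyapunov {P M F N : Matrix ι ι 𝕜}
    (hF : F = N + M * F * Mᴴ) : ((P - Mᴴ * P * M) * F).trace = (P * N).trace := by
  have hN : N = F - M * F * Mᴴ := eq_sub_of_add_eq hF.symm
  have hcycle : (Mᴴ * P * M * F).trace = (P * (M * F * Mᴴ)).trace := by
    rw [Matrix.mul_assoc, Matrix.mul_assoc, trace_mul_comm]
    simp only [Matrix.mul_assoc]
  rw [hN, Matrix.sub_mul, Matrix.mul_sub, trace_sub, trace_sub, hcycle]

theorem lqrCost_eq_of_riccati {A P Q N F : Matrix ι ι 𝕜} {B : Matrix ι κ 𝕜}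
    {R S : Matrix κ κ 𝕜} {K K₀ : Matrix κ ι 𝕜} (hP : P.IsHermitian) (hS : S.IsHermitian)
    (hSR : S = R + Bᴴ * P * B) (hSK₀ : S * K₀ = Bᴴ * P * A)
    (hare : P = Aᴴ * P * A - K₀ᴴ * S * K₀ + Q)
    (hF : F = N + (A - B * K) * F * (A - B * K)ᴴ) :
    lqrCost Q R K F = (P * N).trace + ((K - K₀)ᴴ * S * (K - K₀) * F).trace := by
  rw [lqrCost, ← trace_add, ← Matrix.add_mul, riccati_completion_of_squares_s11 hP hS hSR hSK₀ hare,
    Matrix.add_mul, trace_add, trace_sub_conj_mul_eq_of_lyapunov hF]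

end CommRing

theorem lqrCost_le_of_riccati [RCLike 𝕜] [DecidableEq κ] {A P Q N F F' : Matrix ι ι 𝕜}
    {B : Matrix ι κ 𝕜} {R : Matrix κ κ 𝕜} {K K' : Matrix κ ι 𝕜}
    (hR : R.PosDef) (hP : P.PosSemidef)
    (hare : P = Aᴴ * P * A - (Aᴴ * P * B) * (R + Bᴴ * P * B)⁻¹ * (Bᴴ * P * A) + Q)
    (hK : K = (Bᴴ * P * B + R)⁻¹ * Bᴴ * P * A)
    (hF : F = N + (A - B * K) * F * (A - B * K)ᴴ)
    (hF' : F' = N + (A - B * K') * F' * (A - B * K')ᴴ) (hF'pos : F'.PosSemidef) :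
    lqrCost Q R K F ≤ lqrCost Q R K' F' := by
  set S := R + Bᴴ * P * B with hSR
  have hS : S.PosDef := hR.add_posSemidef (hP.conjTranspose_mul_mul_same B)
  have hSdet : IsUnit S.det := hS.det_pos.ne'.isUnit
  have hSK : S * K = Bᴴ * P * A := by
    rw [hK, add_comm, ← hSR, Matrix.mul_assoc, Matrix.mul_assoc, Matrix.mul_assoc,
      mul_nonsing_inv_cancel_left S _ hSdet]
  have hare' : P = Aᴴ * P * A - Kᴴ * S * K + Q := by
    rwa [← conjTranspose_mul_eq_of_mul_eq hP.1 hS.1 hSK, ← hSK, Matrix.mul_assoc (Kᴴ * S),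
      nonsing_inv_mul_cancel_left S _ hSdet] at hare
  rw [lqrCost_eq_of_riccati hP.1 hS.1 hSR hSK hare' hF,
    lqrCost_eq_of_riccati hP.1 hS.1 hSR hSK hare' hF', sub_self, conjTranspose_zero,
    Matrix.zero_mul, Matrix.zero_mul, Matrix.zero_mul, trace_zero, add_zero]
  exact le_add_of_nonneg_right ((hS.posSemidef.conjTranspose_mul_mul_same _).trace_mul_nonneg_s11 hF'pos)

end Matrix

theorem Complex.le_of_re_le {z w : ℂ} (hz : 0 ≤ z) (hw : 0 ≤ w) (h : z.re ≤ w.re) : z ≤ w :=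
  Complex.le_def.2 ⟨h, by rw [← (Complex.nonneg_iff.1 hz).2, ← (Complex.nonneg_iff.1 hw).2]⟩

theorem antitoneOn_monotoneOn_of_weighted_sum_minimal {t e : ℝ → ℝ}
    (h : ∀ β γ, 0 < β → 0 < γ → β * t β + β⁻¹ * e β ≤ β * t γ + β⁻¹ * e γ) :
    AntitoneOn t (Set.Ioi 0) ∧ MonotoneOn e (Set.Ioi 0) := by
  have scaled : ∀ β γ, 0 < β → 0 < γ → β ^ 2 * t β + e β ≤ β ^ 2 * t γ + e γ := by
    intro β γ hβ hγ
    have expand : ∀ x y : ℝ, β * (β * x + β⁻¹ * y) = β ^ 2 * x + y := fun x y => by field_simp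
    simpa only [expand] using mul_le_mul_of_nonneg_left (h β γ hβ hγ) hβ.le
  have strict : ∀ α α', 0 < α → α < α' → t α' ≤ t α ∧ e α ≤ e α' := by
    intro α α' hα hlt
    have h₁ := scaled α α' hα (hα.trans hlt)
    have h₂ := scaled α' α (hα.trans hlt) hα
    have hsq : α ^ 2 < α' ^ 2 := by gcongr
    have htrack : t α' ≤ t α := by nlinarith
    exact ⟨htrack, by nlinarith⟩
  constructor
  · intro α hα α' _ hle
    rcases hle.eq_or_lt with rfl | hlt
    exacts [le_rfl, (strict α α' hα hlt).1]
  · intro α hα α' _ hle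
    rcases hle.eq_or_lt with rfl | hlt
    exacts [le_rfl, (strict α α' hα hlt).2]

theorem lqg_dt_track_decreasing_effort_increasing_general {n m p : ℕ}
    (A : Matrix (Fin n) (Fin n) ℂ) (B : Matrix (Fin n) (Fin m) ℂ)
    (C : Matrix (Fin p) (Fin n) ℂ)
    (Q₀ : Matrix (Fin n) (Fin n) ℂ) (hQ₀ : Q₀.PosSemidef)
    (R₀ : Matrix (Fin m) (Fin m) ℂ) (hR₀ : R₀.PosDef)
    (V : Matrix (Fin p) (Fin p) ℂ)
    -- discrete filter Riccati solution Γ and Kalman gain L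
    (G : Matrix (Fin n) (Fin n) ℂ)
    (L : Matrix (Fin n) (Fin p) ℂ)
    -- discrete control Riccati solution P_α, gain K_α and covariance F_α, α > 0
    (P F : ℝ → Matrix (Fin n) (Fin n) ℂ)
    (K : ℝ → Matrix (Fin m) (Fin n) ℂ)
    (hP : ∀ α : ℝ, 0 < α → (P α).PosSemidef)
    (hCARE : ∀ α : ℝ, 0 < α →
      P α = Aᴴ * P α * A
        - (Aᴴ * P α * B) * ((α : ℂ)⁻¹ • R₀ + Bᴴ * P α * B)⁻¹ * (Bᴴ * P α * A)
        + (α : ℂ) • Q₀)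
    (hK : ∀ α : ℝ, 0 < α → K α = (Bᴴ * P α * B + (α : ℂ)⁻¹ • R₀)⁻¹ * Bᴴ * P α * A)
    (hF : ∀ α : ℝ, 0 < α → (F α).PosSemidef)
    (hLyap : ∀ α : ℝ, 0 < α →
      F α = L * (C * G * Cᴴ + V) * Lᴴ + (A - B * K α) * F α * (A - B * K α)ᴴ) :
    ∀ α α' : ℝ, 0 < α → α ≤ α' →
      (Q₀ * (G + F α')).trace ≤ (Q₀ * (G + F α)).trace ∧
      ((K α)ᴴ * R₀ * K α * F α).trace ≤ ((K α')ᴴ * R₀ * K α' * F α').trace := by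
  have hcost : ∀ β γ : ℝ, 0 < β → 0 < γ →
      β * (Q₀ * F β).trace.re + β⁻¹ * ((K β)ᴴ * R₀ * K β * F β).trace.re
        ≤ β * (Q₀ * F γ).trace.re + β⁻¹ * ((K γ)ᴴ * R₀ * K γ * F γ).trace.re := by
    intro β γ hβ hγ
    have hR : ((β : ℂ)⁻¹ • R₀).PosDef := hR₀.smul (RCLike.inv_pos.2 (by exact_mod_cast hβ))
    have hle := lqrCost_le_of_riccati hR (hP β hβ) (hCARE β hβ) (hK β hβ) (hLyap β hβ)
      (hLyap γ hγ) (hF γ hγ)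
    rw [lqrCost_smul_smul, lqrCost_smul_smul] at hle
    simpa only [← Complex.ofReal_inv, Complex.add_re, Complex.re_ofReal_mul] using
      (Complex.le_def.1 hle).1
  obtain ⟨htrack, heffort⟩ := antitoneOn_monotoneOn_of_weighted_sum_minimal hcost
  have track_nonneg : ∀ β, 0 < β → 0 ≤ (Q₀ * F β).trace :=
    fun β hβ => hQ₀.trace_mul_nonneg_s11 (hF β hβ)
  have effort_nonneg : ∀ β, 0 < β → 0 ≤ ((K β)ᴴ * R₀ * K β * F β).trace :=
    fun β hβ => (hR₀.posSemidef.conjTranspose_mul_mul_same (K β)).trace_mul_nonneg_s11 (hF β hβ)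
  intro α α' hα hle
  have hα' : 0 < α' := hα.trans_le hle
  refine ⟨?_, Complex.le_of_re_le (effort_nonneg α hα) (effort_nonneg α' hα')
    (heffort hα hα' hle)⟩
  rw [Matrix.mul_add, Matrix.mul_add, trace_add, trace_add]
  exact add_le_add_right (Complex.le_of_re_le (track_nonneg α' hα') (track_nonneg α hα)
    (htrack hα hα' hle)) _

/-- Discrete-time LQG with weights `Q(α) = α Q₀`, `R(α) = R₀ / α`: the
stationary tracking error `P_track(α) = tr (Q₀ (Γ + F_α))` is decreasing in `α`
and the stationary control effort `P_effort(α) = tr (K_αᴴ R₀ K_α F_α)` is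
increasing in `α`. -/
theorem lqg_dt_track_decreasing_effort_increasing {n m p : ℕ}
    (hn : 0 < n) (hm : 0 < m) (hp : 0 < p)
    (A : Matrix (Fin n) (Fin n) ℂ) (B : Matrix (Fin n) (Fin m) ℂ)
    (C : Matrix (Fin p) (Fin n) ℂ)
    (Q₀ : Matrix (Fin n) (Fin n) ℂ) (hQ₀ : Q₀.PosSemidef)
    (R₀ : Matrix (Fin m) (Fin m) ℂ) (hR₀ : R₀.PosDef)
    (V : Matrix (Fin p) (Fin p) ℂ) (hV : V.PosDef)
    (W : Matrix (Fin n) (Fin n) ℂ) (hW : W.PosSemidef)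
    -- discrete filter Riccati solution Γ and Kalman gain L
    (G : Matrix (Fin n) (Fin n) ℂ) (hG : G.PosSemidef)
    (hFARE : G = A * G * Aᴴ - A * G * Cᴴ * (C * G * Cᴴ + V)⁻¹ * C * G * Aᴴ + W)
    (L : Matrix (Fin n) (Fin p) ℂ) (hL : L = G * Cᴴ * (C * G * Cᴴ + V)⁻¹)
    -- discrete control Riccati solution P_α, gain K_α and covariance F_α, α > 0
    (P F : ℝ → Matrix (Fin n) (Fin n) ℂ)
    (K : ℝ → Matrix (Fin m) (Fin n) ℂ)
    (hP : ∀ α : ℝ, 0 < α → (P α).PosSemidef)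
    (hCARE : ∀ α : ℝ, 0 < α →
      P α = Aᴴ * P α * A
        - (Aᴴ * P α * B) * ((α : ℂ)⁻¹ • R₀ + Bᴴ * P α * B)⁻¹ * (Bᴴ * P α * A)
        + (α : ℂ) • Q₀)
    (hK : ∀ α : ℝ, 0 < α → K α = (Bᴴ * P α * B + (α : ℂ)⁻¹ • R₀)⁻¹ * Bᴴ * P α * A)
    (hSchur : ∀ α : ℝ, 0 < α → IsSchurStable (A - B * K α))
    (hF : ∀ α : ℝ, 0 < α → (F α).PosSemidef)
    (hLyap : ∀ α : ℝ, 0 < α →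
      F α = L * (C * G * Cᴴ + V) * Lᴴ + (A - B * K α) * F α * (A - B * K α)ᴴ) :
    ∀ α α' : ℝ, 0 < α → α ≤ α' →
      (Q₀ * (G + F α')).trace ≤ (Q₀ * (G + F α)).trace ∧
      ((K α)ᴴ * R₀ * K α * F α).trace ≤ ((K α')ᴴ * R₀ * K α' * F α').trace :=
  lqg_dt_track_decreasing_effort_increasing_general A B C Q₀ hQ₀ R₀ hR₀ V G L P F K hP hCARE hK hF
    hLyap
end

section
/- Let a, b, c, v, w, q₀, r₀ be real numbers with b, c, v, w, q₀, r₀ > 0, and let σ̄ = v·(a + √(a² + c²·w/v))/c². Define for α > 0 the scalar stationary control effort P_effort(α) = (r₀·σ̄²·c²/(2·b²·v))·(a + √(a² + α²·b²·q₀/r₀))²/√(a² + α²·b²·q₀/r₀). Then P_effort is strictly increasing on (0, ∞): for all 0 < α < α′, P_effort(α) < P_effort(α′). -/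
/-- Scalar continuous-time LQG: the stationary control effort
`P_effort(α) = (r₀ σ̄² c² / (2 b² v)) (a + √(a² + α² b² q₀ / r₀))² / √(a² + α² b² q₀ / r₀)`
is strictly increasing in `α` on `(0, ∞)`. -/
theorem scalar_Peffort_strictMono (a b c v w q₀ r₀ : ℝ)
    (hb : 0 < b) (hc : 0 < c) (hv : 0 < v) (hw : 0 < w)
    (hq₀ : 0 < q₀) (hr₀ : 0 < r₀)
    (σ : ℝ) (hσ : σ = v * (a + Real.sqrt (a ^ 2 + c ^ 2 * w / v)) / c ^ 2)
    (Peffort : ℝ → ℝ)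
    (hPeffort : ∀ α : ℝ, Peffort α =
      (r₀ * σ ^ 2 * c ^ 2 / (2 * b ^ 2 * v))
        * (a + Real.sqrt (a ^ 2 + α ^ 2 * b ^ 2 * q₀ / r₀)) ^ 2
        / Real.sqrt (a ^ 2 + α ^ 2 * b ^ 2 * q₀ / r₀)) :
    ∀ α α' : ℝ, 0 < α → α < α' → Peffort α < Peffort α' := by
  intro α α' hα hαα'
  have hσpos : 0 < σ := by
    have h1 : 0 < c ^ 2 * w / v := by positivity
    have h2 : |a| < Real.sqrt (a ^ 2 + c ^ 2 * w / v) := by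
      rw [← Real.sqrt_sq_eq_abs]
      exact Real.sqrt_lt_sqrt (by positivity) (by linarith)
    have h3 : -a ≤ |a| := neg_le_abs a
    rw [hσ]
    have : 0 < a + Real.sqrt (a ^ 2 + c ^ 2 * w / v) := by linarith
    positivity
  set C := r₀ * σ ^ 2 * c ^ 2 / (2 * b ^ 2 * v) with hC
  have hCpos : 0 < C := by positivity
  set s := Real.sqrt (a ^ 2 + α ^ 2 * b ^ 2 * q₀ / r₀) with hs
  set s' := Real.sqrt (a ^ 2 + α' ^ 2 * b ^ 2 * q₀ / r₀) with hs'
  have hα' : 0 < α' := lt_trans hα hαα'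
  have habs : |a| < s := by
    rw [hs, ← Real.sqrt_sq_eq_abs]
    exact Real.sqrt_lt_sqrt (by positivity)
      (by have h : 0 < α ^ 2 * b ^ 2 * q₀ / r₀ := by positivity
          linarith)
  have hspos : 0 < s := lt_of_le_of_lt (abs_nonneg a) habs
  have hss' : s < s' := by
    rw [hs, hs']
    apply Real.sqrt_lt_sqrt (by positivity)
    have : α ^ 2 * b ^ 2 * q₀ / r₀ < α' ^ 2 * b ^ 2 * q₀ / r₀ := by
      gcongr
    linarith
  have hs'pos : 0 < s' := lt_trans hspos hss'
  have hsq : s ^ 2 = a ^ 2 + α ^ 2 * b ^ 2 * q₀ / r₀ :=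
    Real.sq_sqrt (by positivity)
  have ha2 : a ^ 2 < s * s' := by
    have : a ^ 2 < s ^ 2 := by nlinarith [sq_abs a, abs_nonneg a]
    nlinarith
  rw [hPeffort, hPeffort]
  rw [div_lt_div_iff₀ hspos hs'pos]
  have hna : -a ≤ |a| := neg_le_abs a
  nlinarith [mul_pos hCpos (mul_pos (sub_pos.2 hss') (sub_pos.2 ha2)), sq_nonneg (a + s)]
end

section
/- Let a, b, c, q₀, r₀, α be real numbers with a, b, c, q₀, r₀, α > 0. For v, w > 0 define σ̄(v, w) = v·(a + √(a² + c²·w/v))/c², β = √(a² + α²·q₀·b²/r₀), P_track(v, w) = q₀·(σ̄(v, w) + (σ̄(v, w)·c)²/(2·v·β)), and P_effort(v, w) = (r₀·σ̄(v, w)²·c²/(2·b²·v))·(a + β)²/β. Then both P_track and P_effort are monotone in (v, w): for all 0 < v ≤ v′ and 0 < w ≤ w′, P_track(v, w) ≤ P_track(v′, w′) and P_effort(v, w) ≤ P_effort(v′, w′). -/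
/-- Scalar continuous-time LQG: with `σ̄(v, w) = v (a + √(a² + c² w / v)) / c²`
and `β = √(a² + α² q₀ b² / r₀)`, both the stationary tracking error
`P_track(v, w) = q₀ (σ̄(v,w) + (σ̄(v,w) c)² / (2 v β))` and the stationary
control effort `P_effort(v, w) = (r₀ σ̄(v,w)² c² / (2 b² v)) (a + β)² / β`
are monotone in `(v, w)`. -/
theorem scalar_performance_monotone_in_noise (a b c q₀ r₀ α : ℝ)
    (ha : 0 < a) (hb : 0 < b) (hc : 0 < c) (hq₀ : 0 < q₀) (hr₀ : 0 < r₀)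
    (hα : 0 < α)
    (σ : ℝ → ℝ → ℝ)
    (hσ : ∀ v w : ℝ, σ v w = v * (a + Real.sqrt (a ^ 2 + c ^ 2 * w / v)) / c ^ 2)
    (β : ℝ) (hβ : β = Real.sqrt (a ^ 2 + α ^ 2 * q₀ * b ^ 2 / r₀))
    (Ptrack Peffort : ℝ → ℝ → ℝ)
    (hPtrack : ∀ v w : ℝ, Ptrack v w =
      q₀ * (σ v w + (σ v w * c) ^ 2 / (2 * v * β)))
    (hPeffort : ∀ v w : ℝ, Peffort v w =
      (r₀ * (σ v w) ^ 2 * c ^ 2 / (2 * b ^ 2 * v)) * (a + β) ^ 2 / β) :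
    ∀ v v' w w' : ℝ, 0 < v → v ≤ v' → 0 < w → w ≤ w' →
      Ptrack v w ≤ Ptrack v' w' ∧ Peffort v w ≤ Peffort v' w' := by
  intro v v' w w' hv hvv' hw hww'
  have hv' : 0 < v' := lt_of_lt_of_le hv hvv'
  have hw' : 0 < w' := lt_of_lt_of_le hw hww'
  have hβpos : 0 < β := by
    rw [hβ]
    apply Real.sqrt_pos.mpr
    positivity
  set T : ℝ → ℝ → ℝ := fun v w => a * v + Real.sqrt (a ^ 2 * v ^ 2 + c ^ 2 * w * v) with hT
  set U : ℝ → ℝ → ℝ := fun v w => a * Real.sqrt v + Real.sqrt (a ^ 2 * v + c ^ 2 * w) with hU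
  have hσT : ∀ v w : ℝ, 0 < v → σ v w = T v w / c ^ 2 := by
    intro v w hv
    rw [hσ, hT]
    have : v * Real.sqrt (a ^ 2 + c ^ 2 * w / v)
        = Real.sqrt (a ^ 2 * v ^ 2 + c ^ 2 * w * v) := by
      rw [show a ^ 2 * v ^ 2 + c ^ 2 * w * v = v ^ 2 * (a ^ 2 + c ^ 2 * w / v) by
        field_simp]
      rw [Real.sqrt_mul (sq_nonneg v), Real.sqrt_sq hv.le]
    rw [mul_add, this]
    ring
  have hTU : ∀ v w : ℝ, 0 < v → T v w = Real.sqrt v * U v w := by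
    intro v w hv
    simp only [hT, hU]
    rw [mul_add, show Real.sqrt v * (a * Real.sqrt v) = a * (Real.sqrt v * Real.sqrt v) by ring,
      Real.mul_self_sqrt hv.le, ← Real.sqrt_mul hv.le]
    ring_nf
  have hUnn : ∀ v w : ℝ, 0 ≤ U v w := by
    intro v w
    simp only [hU]
    positivity
  have hT2U : ∀ v w : ℝ, 0 < v → T v w ^ 2 / v = U v w ^ 2 := by
    intro v w hv
    rw [hTU v w hv, mul_pow, Real.sq_sqrt hv.le]
    field_simp
  have hTmono : T v w ≤ T v' w' := by
    simp only [hT]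
    gcongr
  have hUmono : U v w ≤ U v' w' := by
    simp only [hU]
    gcongr
  have hU2mono : U v w ^ 2 ≤ U v' w' ^ 2 := by
    have := hUnn v w
    nlinarith
  have hTnn : 0 ≤ T v w := by
    rw [hTU v w hv]; positivity
  constructor
  · rw [hPtrack v w, hPtrack v' w', hσT v w hv, hσT v' w' hv']
    have e1 : ∀ (vv ww : ℝ), 0 < vv →
        q₀ * (T vv ww / c ^ 2 + (T vv ww / c ^ 2 * c) ^ 2 / (2 * vv * β))
        = q₀ * (T vv ww / c ^ 2 + (T vv ww ^ 2 / vv) / (c ^ 2 * (2 * β))) := by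
      intro vv ww hvv
      field_simp
    rw [e1 v w hv, e1 v' w' hv', hT2U v w hv, hT2U v' w' hv']
    gcongr
  · rw [hPeffort v w, hPeffort v' w', hσT v w hv, hσT v' w' hv']
    have e2 : ∀ (vv ww : ℝ), 0 < vv →
        r₀ * (T vv ww / c ^ 2) ^ 2 * c ^ 2 / (2 * b ^ 2 * vv) * (a + β) ^ 2 / β
        = (T vv ww ^ 2 / vv) * (r₀ / (c ^ 2 * 2 * b ^ 2) * (a + β) ^ 2 / β) := by
      intro vv ww hvv
      field_simp
    rw [e2 v w hv, e2 v' w' hv', hT2U v w hv, hT2U v' w' hv']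
    gcongr
end
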